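/- Let μ ∈ (0,1) and let (I_k)_{k≥1} be i.i.d. Bernoulli(μ) random variables with empirical mean Ī_k = (Σ_{j=1}^k I_j)/k. Let (ᾱ_k) be positive reals with ᾱ_k → 0 and log(1/ᾱ_k)/k → 0, and set δ_k = √(6·log(1/ᾱ_k)/(k·μ)). Then E[ |Ī_k − μ|/(ᾱ_k + 1 − Ī_k) ] → 0 as k → ∞. -/

import Mathlib

/-!
Split according to whether the empirical mean `Ī_k` exceeds the midpoint `(1 + μ) / 2`.
Below it the denominator is at least `(1 - μ) / 2`, so that part of the expectation is at most
`2 / (1 - μ) · E|Ī_k - μ| ≤ 2 / (1 - μ) · √(μ (1 - μ) / k)` by Cauchy–Schwarz. Above it the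
integrand is at most `1 / ᾱ_k`, and by Hoeffding's inequality the event has probability at most
`exp (-(1 - μ)² k / 2)`. Finally `ᾱ_k⁻¹ exp (-c k) = exp (k (log (1 / ᾱ_k) / k - c)) → 0`.
-/

open MeasureTheory ProbabilityTheory Filter Real Finset Topology

lemma abs_sub_div_le_of_mem_Icc {x m a : ℝ} (hx : x ∈ Set.Icc 0 1) (hm : m ∈ Set.Ico 0 1)
    (ha : 0 < a) :
    |x - m| / (a + 1 - x) ≤
      2 / (1 - m) * |x - m| + Set.indicator {y | (1 + m) / 2 ≤ y} (fun _ ↦ a⁻¹) x := by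
  obtain ⟨hx0, hx1⟩ := hx
  obtain ⟨hm0, hm1⟩ := hm
  have hm1' : 0 < 1 - m := by linarith
  by_cases hhigh : (1 + m) / 2 ≤ x
  · rw [Set.indicator_of_mem (by exact hhigh), ← one_div]
    have hfrac : |x - m| / (a + 1 - x) ≤ 1 / a :=
      div_le_div₀ zero_le_one (abs_le.2 ⟨by linarith, by linarith⟩) ha (by linarith)
    have hlin : 0 ≤ 2 / (1 - m) * |x - m| := by positivity
    linarith
  · rw [Set.indicator_of_notMem (by exact hhigh), add_zero, div_mul_eq_mul_div, mul_comm,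
      ← div_div_eq_mul_div]
    exact div_le_div_of_nonneg_left (abs_nonneg _) (by positivity) (by linarith)

lemma tendsto_inv_mul_exp_neg_mul_atTop {α : ℕ → ℝ} (hα : ∀ k, 0 < α k)
    (hlog : Tendsto (fun k : ℕ ↦ log (1 / α k) / k) atTop (𝓝 0)) {c : ℝ} (hc : 0 < c) :
    Tendsto (fun k : ℕ ↦ (α k)⁻¹ * exp (-c * k)) atTop (𝓝 0) := by
  have hexp : ∀ᶠ k : ℕ in atTop,
      exp (k * (log (1 / α k) / k - c)) = (α k)⁻¹ * exp (-c * k) := by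
    filter_upwards [eventually_ne_atTop 0] with k hk
    rw [mul_sub, mul_div_cancel₀ _ (by exact_mod_cast hk), sub_eq_add_neg, exp_add,
      exp_log (by simp [hα k]), one_div, mul_comm (k : ℝ), neg_mul]
  refine (tendsto_exp_atBot.comp ?_).congr' hexp
  exact tendsto_natCast_atTop_atTop.atTop_mul_neg (neg_neg_of_pos hc)
    (by simpa using hlog.sub_const c)

section

variable {Ω : Type*} [MeasurableSpace Ω] {P : Measure Ω}

lemma integral_abs_sub_integral_le_sqrt_variance [IsProbabilityMeasure P] {X : Ω → ℝ}
    (hX : MemLp X 2 P) :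
    ∫ ω, |X ω - P[X]| ∂P ≤ √Var[X; P] := by
  have hY : MemLp (fun ω ↦ |X ω - P[X]|) 2 P := (hX.sub (memLp_const _)).abs
  -- Cauchy–Schwarz, in the form `0 ≤ Var |X - E X|`.
  have hvar := variance_nonneg (fun ω ↦ |X ω - P[X]|) P
  rw [variance_eq_sub hY] at hvar
  apply Real.le_sqrt_of_sq_le
  rw [variance_eq_integral hX.aemeasurable]
  simpa [sq_abs] using hvar

lemma variance_sum_div_card [IsFiniteMeasure P] {ι : Type*} {X : ι → Ω → ℝ}
    (hX : ∀ i, MemLp (X i) 2 P) (hindep : Pairwise fun i j ↦ X i ⟂ᵢ[P] X j) {v : ℝ}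
    (hv : ∀ i, Var[X i; P] = v) (s : Finset ι) :
    Var[fun ω ↦ (∑ i ∈ s, X i ω) / #s; P] = v / #s := by
  have hsum := IndepFun.variance_sum (s := s) (fun i _ ↦ hX i) (fun i _ j _ hij ↦ hindep hij)
  simp only [hv, sum_const, nsmul_eq_mul] at hsum
  simp_rw [div_eq_inv_mul]
  rw [variance_const_mul]
  simp only [← Finset.sum_apply, hsum]
  rcases eq_or_ne (#s : ℝ) 0 with hs | hs
  · simp [hs]
  · field_simp

lemma integral_abs_sum_div_card_sub_le [IsProbabilityMeasure P] {ι : Type*}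
    {X : ι → Ω → ℝ} (hX : ∀ i, MemLp (X i) 2 P) (hindep : Pairwise fun i j ↦ X i ⟂ᵢ[P] X j)
    {m v : ℝ} (hm : ∀ i, P[X i] = m) (hv : ∀ i, Var[X i; P] = v) {s : Finset ι}
    (hs : s.Nonempty) :
    ∫ ω, |(∑ i ∈ s, X i ω) / #s - m| ∂P ≤ √(v / #s) := by
  have hmean : ∫ ω, (∑ i ∈ s, X i ω) / #s ∂P = m := by
    rw [integral_div, integral_finsetSum _ fun i _ ↦ (hX i).integrable one_le_two]
    simp only [hm, sum_const, nsmul_eq_mul]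
    field_simp [hs.card_pos.ne']
  have hL2 : MemLp (fun ω ↦ (∑ i ∈ s, X i ω) / #s) 2 P := by
    simpa only [div_eq_mul_inv] using (memLp_finsetSum s fun i _ ↦ hX i).mul_const (#s : ℝ)⁻¹
  simpa only [hmean, variance_sum_div_card hX hindep hv] using
    integral_abs_sub_integral_le_sqrt_variance hL2

lemma integral_eq_measureReal_of_zero_or_one {X : Ω → ℝ} (hX : Measurable X)
    (h01 : ∀ ω, X ω = 0 ∨ X ω = 1) : P[X] = P.real {ω | X ω = 1} := by
  have hind : X = {ω | X ω = 1}.indicator 1 := by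
    ext ω; rcases h01 ω with h | h <;> simp [h]
  conv_lhs => rw [hind]
  exact integral_indicator_one (hX (measurableSet_singleton 1))

lemma variance_eq_of_zero_or_one [IsProbabilityMeasure P] {X : Ω → ℝ} (hX : Measurable X)
    (h01 : ∀ ω, X ω = 0 ∨ X ω = 1) : Var[X; P] = P[X] * (1 - P[X]) := by
  have hL2 : MemLp X 2 P := memLp_of_bounded (a := 0) (b := 1)
    (ae_of_all _ fun ω ↦ by rcases h01 ω with h | h <;> simp [h]) hX.aestronglyMeasurable 2
  have hsq : X ^ 2 = X := by ext ω; rcases h01 ω with h | h <;> simp [h]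
  rw [variance_eq_sub hL2, hsq]
  ring

lemma measureReal_le_sum_div_card_le_exp [IsProbabilityMeasure P] {ι : Type*} {X : ι → Ω → ℝ}
    (hindep : iIndepFun X P) (hmeas : ∀ i, Measurable (X i)) {a b : ℝ}
    (hab : ∀ i ω, X i ω ∈ Set.Icc a b) {m : ℝ} (hm : ∀ i, P[X i] = m) {s : Finset ι}
    (hs : s.Nonempty) {ε : ℝ} (hε : 0 ≤ ε) :
    P.real {ω | m + ε ≤ (∑ i ∈ s, X i ω) / #s} ≤ exp (-2 * #s * ε ^ 2 / (b - a) ^ 2) := by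
  have hsubG : ∀ i ∈ s, HasSubgaussianMGF (fun ω ↦ X i ω - P[X i]) ((‖b - a‖₊ / 2) ^ 2) P :=
    fun i _ ↦ hasSubgaussianMGF_of_mem_Icc (hmeas i).aemeasurable (ae_of_all _ (hab i))
  have hindep' : iIndepFun (fun i ω ↦ X i ω - P[X i]) P :=
    hindep.comp (fun i (x : ℝ) ↦ x - ∫ ω, X i ω ∂P) fun i ↦ measurable_sub_const _
  have hcard : (0 : ℝ) < #s := by exact_mod_cast hs.card_pos
  have hset : {ω | m + ε ≤ (∑ i ∈ s, X i ω) / #s} = {ω | #s * ε ≤ ∑ i ∈ s, (X i ω - P[X i])} := by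
    ext ω
    simp only [Set.mem_ofPred_eq, le_div_iff₀ hcard, sum_sub_distrib, hm, sum_const, nsmul_eq_mul]
    constructor <;> intro h <;> linarith
  rw [hset]
  refine (HasSubgaussianMGF.measure_sum_ge_le_of_iIndepFun hindep' hsubG
    (by positivity)).trans_eq ?_
  congr 1
  push_cast
  simp only [sum_const, nsmul_eq_mul, Real.norm_eq_abs, div_pow, sq_abs]
  rcases eq_or_ne ((b - a) ^ 2) 0 with hab | hab
  · simp [hab]
  · field_simp

lemma integral_abs_sub_div_le [IsProbabilityMeasure P] {Y : Ω → ℝ} (hY : Measurable Y)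
    (hY01 : ∀ ω, Y ω ∈ Set.Icc 0 1) {m a : ℝ} (hm : m ∈ Set.Ico 0 1) (ha : 0 < a) :
    ∫ ω, |Y ω - m| / (a + 1 - Y ω) ∂P ≤
      2 / (1 - m) * ∫ ω, |Y ω - m| ∂P + a⁻¹ * P.real {ω | (1 + m) / 2 ≤ Y ω} := by
  have hA : MeasurableSet {ω | (1 + m) / 2 ≤ Y ω} := measurableSet_le measurable_const hY
  have habs : Integrable (fun ω ↦ |Y ω - m|) P :=
    ((Integrable.of_mem_Icc 0 1 hY.aemeasurable (ae_of_all _ hY01)).sub (integrable_const m)).abs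
  have hind : Integrable ({ω | (1 + m) / 2 ≤ Y ω}.indicator fun _ ↦ a⁻¹) P :=
    (integrable_const _).indicator hA
  calc ∫ ω, |Y ω - m| / (a + 1 - Y ω) ∂P
      ≤ ∫ ω, (2 / (1 - m) * |Y ω - m| + {ω | (1 + m) / 2 ≤ Y ω}.indicator (fun _ ↦ a⁻¹) ω) ∂P := by
        refine integral_mono_of_nonneg (ae_of_all _ fun ω ↦ ?_) ((habs.const_mul _).add hind)
          (ae_of_all _ fun ω ↦ abs_sub_div_le_of_mem_Icc (hY01 ω) hm ha)
        exact div_nonneg (abs_nonneg _) (by linarith [(hY01 ω).2])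
    _ = 2 / (1 - m) * ∫ ω, |Y ω - m| ∂P + a⁻¹ * P.real {ω | (1 + m) / 2 ≤ Y ω} := by
        rw [integral_add (habs.const_mul _) hind, integral_const_mul, integral_indicator_const _ hA,
          smul_eq_mul, mul_comm (P.real _)]

lemma integral_abs_sum_div_card_sub_div_le [IsProbabilityMeasure P] {ι : Type*}
    {X : ι → Ω → ℝ} (hindep : iIndepFun X P) (hmeas : ∀ i, Measurable (X i))
    (h01 : ∀ i ω, X i ω ∈ Set.Icc 0 1) {m v a : ℝ} (hm : ∀ i, P[X i] = m)
    (hv : ∀ i, Var[X i; P] = v) (hm01 : m ∈ Set.Ico 0 1) (ha : 0 < a) {s : Finset ι}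
    (hs : s.Nonempty) :
    ∫ ω, |(∑ i ∈ s, X i ω) / #s - m| / (a + 1 - (∑ i ∈ s, X i ω) / #s) ∂P ≤
      2 / (1 - m) * √(v / #s) + a⁻¹ * exp (-((1 - m) ^ 2 / 2) * #s) := by
  have hmean01 : ∀ ω, (∑ i ∈ s, X i ω) / #s ∈ Set.Icc (0 : ℝ) 1 := fun ω ↦ by
    rw [← expect_eq_sum_div_card]
    exact ⟨le_expect hs fun i _ ↦ (h01 i ω).1, expect_le hs fun i _ ↦ (h01 i ω).2⟩
  have hL2 : ∀ i, MemLp (X i) 2 P := fun i ↦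
    memLp_of_bounded (ae_of_all _ (h01 i)) (hmeas i).aestronglyMeasurable 2
  have hL1 := integral_abs_sum_div_card_sub_le hL2 (fun i j hij ↦ hindep.indepFun hij) hm hv hs
  have htail := measureReal_le_sum_div_card_le_exp hindep hmeas h01 hm hs
    (ε := (1 - m) / 2) (by linarith [hm01.2])
  refine (integral_abs_sub_div_le (by fun_prop) hmean01 hm01 ha).trans (add_le_add ?_ ?_)
  · exact mul_le_mul_of_nonneg_left hL1 (div_nonneg zero_le_two (by linarith [hm01.2]))
  · refine mul_le_mul_of_nonneg_left ?_ (inv_nonneg.2 ha.le)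
    rw [show (1 + m) / 2 = m + (1 - m) / 2 by ring]
    refine htail.trans_eq (congrArg exp ?_)
    ring

end

theorem lln_A_term_vanishes_general
    {Ω : Type*} [MeasurableSpace Ω] (P : Measure Ω) [IsProbabilityMeasure P]
    (μ : ℝ) (hμ : μ ∈ Set.Ioo (0 : ℝ) 1)
    (I : ℕ → Ω → ℝ) (hmeas : ∀ k, Measurable (I k))
    (hvals : ∀ k ω, I k ω = 0 ∨ I k ω = 1)
    (hber : ∀ k, P {ω | I k ω = 1} = ENNReal.ofReal μ)
    (hindep : iIndepFun I P)
    (Ibar : ℕ → Ω → ℝ)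
    (hIbar : ∀ k ω, Ibar k ω = (∑ j ∈ Finset.Icc 1 k, I j ω) / k)
    (α : ℕ → ℝ) (hα : ∀ k, 0 < α k)
    (hαlog : Tendsto (fun k : ℕ => Real.log (1 / α k) / k) atTop (nhds 0)) :
    Tendsto (fun k : ℕ => ∫ ω, |Ibar k ω - μ| / (α k + 1 - Ibar k ω) ∂P)
      atTop (nhds 0) := by
  obtain ⟨hμ0, hμ1⟩ := hμ
  have hmean : ∀ k, P[I k] = μ := fun k ↦ by
    rw [integral_eq_measureReal_of_zero_or_one (hmeas k) (hvals k), measureReal_def, hber,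
      ENNReal.toReal_ofReal hμ0.le]
  have hvar : ∀ k, Var[I k; P] = μ * (1 - μ) := fun k ↦ by
    rw [variance_eq_of_zero_or_one (hmeas k) (hvals k), hmean]
  have hI01 : ∀ k ω, I k ω ∈ Set.Icc (0 : ℝ) 1 := fun k ω ↦ by
    rcases hvals k ω with h | h <;> simp [h]
  have hbound : ∀ k ≥ 1, ∫ ω, |Ibar k ω - μ| / (α k + 1 - Ibar k ω) ∂P ≤
      2 / (1 - μ) * √(μ * (1 - μ) / k) + (α k)⁻¹ * exp (-((1 - μ) ^ 2 / 2) * k) := fun k hk ↦ by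
    simpa [hIbar] using integral_abs_sum_div_card_sub_div_le hindep hmeas hI01 hmean hvar
      ⟨hμ0.le, hμ1⟩ (hα k) (nonempty_Icc.2 hk)
  have hIbar1 : ∀ k ω, Ibar k ω ≤ 1 := fun k ω ↦ by
    rw [hIbar]
    refine div_le_one_of_le₀ ?_ k.cast_nonneg
    simpa using sum_le_card_nsmul (Icc 1 k) (I · ω) 1 fun j _ ↦ (hI01 j ω).2
  have hnonneg : ∀ k, 0 ≤ ∫ ω, |Ibar k ω - μ| / (α k + 1 - Ibar k ω) ∂P := fun k ↦
    integral_nonneg fun ω ↦ div_nonneg (abs_nonneg _) (by linarith [hIbar1 k ω, hα k])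
  have hsqrt : Tendsto (fun k : ℕ ↦ √(μ * (1 - μ) / k)) atTop (𝓝 0) := by
    simpa using (tendsto_const_div_atTop_nhds_zero_nat (μ * (1 - μ))).sqrt
  refine squeeze_zero' (Eventually.of_forall hnonneg) (eventually_atTop.2 ⟨1, hbound⟩) ?_
  simpa using (hsqrt.const_mul (2 / (1 - μ))).add
    (tendsto_inv_mul_exp_neg_mul_atTop hα hαlog (by positivity : 0 < (1 - μ) ^ 2 / 2))

/-- for i.i.d. Bernoulli(μ) variables with empirical means `Ī_k`, and
positive reals `ᾱ_k` with `ᾱ_k → 0` and `log(1/ᾱ_k)/k → 0` (with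
`δ_k = √(6 log(1/ᾱ_k)/(k μ))` in the proof), one has
`E[|Ī_k - μ|/(ᾱ_k + 1 - Ī_k)] → 0` as `k → ∞`. -/
theorem lln_A_term_vanishes
    {Ω : Type*} [MeasurableSpace Ω] (P : Measure Ω) [IsProbabilityMeasure P]
    (μ : ℝ) (hμ : μ ∈ Set.Ioo (0 : ℝ) 1)
    (I : ℕ → Ω → ℝ) (hmeas : ∀ k, Measurable (I k))
    (hvals : ∀ k ω, I k ω = 0 ∨ I k ω = 1)
    (hber : ∀ k, P {ω | I k ω = 1} = ENNReal.ofReal μ)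
    (hindep : iIndepFun I P)
    (Ibar : ℕ → Ω → ℝ)
    (hIbar : ∀ k ω, Ibar k ω = (∑ j ∈ Finset.Icc 1 k, I j ω) / k)
    (α : ℕ → ℝ) (hα : ∀ k, 0 < α k)
    (hα0 : Tendsto α atTop (nhds 0))
    (hαlog : Tendsto (fun k : ℕ => Real.log (1 / α k) / k) atTop (nhds 0))
    (δ : ℕ → ℝ)
    (hδ : ∀ k, δ k = Real.sqrt (6 * Real.log (1 / α k) / (k * μ))) :
    Tendsto (fun k : ℕ => ∫ ω, |Ibar k ω - μ| / (α k + 1 - Ibar k ω) ∂P)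
      atTop (nhds 0) :=
  lln_A_term_vanishes_general P μ hμ I hmeas hvals hber hindep Ibar hIbar α hα hαlog
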